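/- Let T ⊂ ℝ^d be a convex set containing the origin, ξ a random vector, and assume that for each σ > 0 the maximizer r(σ) of r ↦ ω(r) − r²/(2σ) exists and is unique, where ω(r) = E[sup_{x ∈ T ∩ rB₂}⟨ξ,x⟩]. Then the map σ ↦ r(σ) is nondecreasing on (0,∞). -/

import Mathlib

/-!
Going from `τ` down to `σ ≤ τ` lowers the objective `ω(r) − r²/(2τ)` by the extra penalty
`(1/(2σ) − 1/(2τ)) r²`, which is larger at larger radii. So if `r(τ) < r(σ)`, then `r(τ)` beats
`r(σ)` at `σ` as well, and uniqueness of the maximizer at `σ` forces `r(τ) = r(σ)`.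
-/

open MeasureTheory Metric Set
open scoped ENNReal NNReal

theorem EReal.sub_coe_add (x : EReal) (a b : ℝ) : x - ((a + b : ℝ) : EReal) = x - a - b := by
  induction x using EReal.rec with
  | bot => simp
  | coe x => norm_cast; ring
  | top => simp only [EReal.top_sub_coe]

theorem sub_sq_div_le_sub_sq_div {x y : EReal} {σ τ r s : ℝ} (hσ : 0 < σ) (hστ : σ ≤ τ)
    (hsr : s ^ 2 ≤ r ^ 2)
    (h : x - ((r ^ 2 / (2 * τ) : ℝ) : EReal) ≤ y - ((s ^ 2 / (2 * τ) : ℝ) : EReal)) :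
    x - ((r ^ 2 / (2 * σ) : ℝ) : EReal) ≤ y - ((s ^ 2 / (2 * σ) : ℝ) : EReal) := by
  set c := 1 / (2 * σ) - 1 / (2 * τ)
  have hc : 0 ≤ c := sub_nonneg.2 (by gcongr)
  have split : ∀ t : ℝ, t ^ 2 / (2 * σ) = t ^ 2 / (2 * τ) + c * t ^ 2 := fun t => by
    simp only [c]; ring
  rw [split, split, EReal.sub_coe_add, EReal.sub_coe_add]
  exact EReal.sub_le_sub h (EReal.coe_le_coe_iff.2 (by gcongr))

theorem statement1
    (w : ℝ → EReal)
    (rr : ℝ → ℝ)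
    (hmax : ∀ σ : ℝ, 0 < σ → 0 ≤ rr σ ∧ ∀ r' : ℝ, 0 ≤ r' →
      w r' - ((r' ^ 2 / (2 * σ) : ℝ) : EReal) ≤ w (rr σ) - (((rr σ) ^ 2 / (2 * σ) : ℝ) : EReal))
    (huniq : ∀ σ : ℝ, 0 < σ → ∀ r : ℝ,
      (0 ≤ r ∧ ∀ r' : ℝ, 0 ≤ r' →
        w r' - ((r' ^ 2 / (2 * σ) : ℝ) : EReal) ≤ w r - ((r ^ 2 / (2 * σ) : ℝ) : EReal)) →
      r = rr σ) :
    ∀ σ τ : ℝ, 0 < σ → σ ≤ τ → rr σ ≤ rr τ := by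
  intro σ τ hσ hστ
  have hτ : 0 < τ := hσ.trans_le hστ
  by_contra! hlt
  obtain ⟨hτ_nonneg, hτ_max⟩ := hmax τ hτ
  have hsq : rr τ ^ 2 ≤ rr σ ^ 2 := pow_le_pow_left₀ hτ_nonneg hlt.le 2
  have hτ_max_at_σ : ∀ r' : ℝ, 0 ≤ r' →
      w r' - ((r' ^ 2 / (2 * σ) : ℝ) : EReal) ≤ w (rr τ) - ((rr τ ^ 2 / (2 * σ) : ℝ) : EReal) :=
    fun r' hr' => ((hmax σ hσ).2 r' hr').trans <|
      sub_sq_div_le_sub_sq_div hσ hστ hsq (hτ_max _ (hmax σ hσ).1)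
  exact hlt.ne (huniq σ hσ (rr τ) ⟨hτ_nonneg, hτ_max_at_σ⟩)
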